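/- arXiv:1501.02501 — 2 statements merged into one kernel-verified Lean document; each statement's English description precedes it below -/
import Mathlib

section
/- Let H be a real Hilbert space, f, g : H → ℝ ∪ {+∞} proper, lower semicontinuous, convex with dom g ⊆ dom f, f Fréchet differentiable on an open set containing dom g, δ ∈ (0, 1/2). Let (x^k) ⊂ dom g and (α_k) satisfy x^{k+1} = prox_{α_k g}(x^k − α_k ∇f(x^k)) and α_k‖∇f(x^{k+1}) − ∇f(x^k)‖ ≤ δ‖x^{k+1} − x^k‖ for all k. Suppose the set S* of minimizers of f+g is nonempty and there is α > 0 with α_k ≥ α for all k. Then for every k ≥ 1: (f+g)(x^k) − min_{x∈H}(f+g)(x) ≤ (1/(2α))·dist(x⁰, S*)²/k. -/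
open Set Filter Topology Bornology RealInnerProductSpace

noncomputable section

variable {H : Type*} [NormedAddCommGroup H] [InnerProductSpace ℝ H] [CompleteSpace H]

/-- The effective domain of an extended-real-valued function. -/
def edom (h : H → EReal) : Set H := {x | h x < ⊤}

/-- `h` is a proper, lower semicontinuous, convex extended-real-valued function. -/
def ProperLscConvex (h : H → EReal) : Prop :=
  (∃ x, h x < ⊤) ∧ (∀ x, ⊥ < h x) ∧ LowerSemicontinuous h ∧
    ∀ x y : H, ∀ a b : ℝ, 0 ≤ a → 0 ≤ b → a + b = 1 →
      h (a • x + b • y) ≤ (a : EReal) * h x + (b : EReal) * h y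

/-- `p` is the proximal point `prox_{αg}(z)`, i.e. a minimizer of
`y ↦ g(y) + (1/(2α))‖y - z‖²` (such a minimizer is automatically unique). -/
def IsProxPt (g : H → EReal) (α : ℝ) (z p : H) : Prop :=
  ∀ y : H, g p + (((1 / (2 * α)) * ‖p - z‖ ^ 2 : ℝ) : EReal)
    ≤ g y + (((1 / (2 * α)) * ‖y - z‖ ^ 2 : ℝ) : EReal)

/-- `f` is Fréchet differentiable, with gradient `f'`, on an open set containing `s`
(in particular `f` is finite there). -/
def GradOnOpenSupset (f : H → EReal) (f' : H → H) (s : Set H) : Prop :=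
  ∃ U : Set H, IsOpen U ∧ s ⊆ U ∧
    ∀ x ∈ U, f x ≠ ⊤ ∧ HasGradientAt (fun y => (f y).toReal) (f' x) x

/-- Second half of Assumption A2: `f'` is uniformly continuous on bounded subsets of
`dom g` and maps bounded subsets of `dom g` to bounded sets. -/
def UCBddOnBounded (g : H → EReal) (f' : H → H) : Prop :=
  ∀ A : Set H, A ⊆ edom g → IsBounded A →
    UniformContinuousOn f' A ∧ IsBounded (f' '' A)

/-- The Linesearch-1 acceptance inequality at the point `x` with stepsize `α`. -/
def LS1 (f' : H → H) (J : H → ℝ → H) (δ : ℝ) (x : H) (α : ℝ) : Prop :=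
  α * ‖f' (J x α) - f' x‖ ≤ δ * ‖J x α - x‖

/-- `α` is the output of Linesearch 1 at `x`: the largest element of
`{σ, σθ, σθ², …}` satisfying the acceptance inequality. -/
def LS1Step (f' : H → H) (J : H → ℝ → H) (δ σ θ : ℝ) (x : H) (α : ℝ) : Prop :=
  ∃ n : ℕ, α = σ * θ ^ n ∧ LS1 f' J δ x α ∧
    ∀ m : ℕ, m < n → ¬ LS1 f' J δ x (σ * θ ^ m)

/-- The set of minimizers `S⁎` of `f + g` over `H`. -/
def argminSet (f g : H → EReal) : Set H := {x | ∀ y, f x + g x ≤ f y + g y}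

/-- The Linesearch-2 acceptance inequality at `x` (with `Jx = prox_g(x - ∇f(x))`)
with stepsize `β`. -/
def LS2Ineq (f g : H → EReal) (f' : H → H) (x Jx : H) (β : ℝ) : Prop :=
  f (x - β • (x - Jx)) + g (x - β • (x - Jx)) ≤
    f x + g x - (β : EReal) * (g x - g Jx)
      - ((β * ⟪f' x, x - Jx⟫ : ℝ) : EReal) + (((β / 2) * ‖x - Jx‖ ^ 2 : ℝ) : EReal)

/-- `v` belongs to the convex subdifferential `∂h(y)`. -/
def InSubdiff (h : H → EReal) (y v : H) : Prop :=
  ∀ z : H, ((⟪v, z - y⟫ : ℝ) : EReal) ≤ h z - h y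

/-- `h` is strongly convex with modulus `μ`. -/
def StrongConvexWith (h : H → EReal) (μ : ℝ) : Prop :=
  ∀ x y v : H, InSubdiff h y v →
    h y + ((⟪v, x - y⟫ : ℝ) : EReal) + (((μ / 2) * ‖x - y‖ ^ 2 : ℝ) : EReal) ≤ h x

lemma grad_convex_ineq
    (f : H → EReal) (f' : H → H)
    (hconv : ∀ x y : H, ∀ a b : ℝ, 0 ≤ a → 0 ≤ b → a + b = 1 →
      f (a • x + b • y) ≤ (a : EReal) * f x + (b : EReal) * f y)
    (hbot : ∀ x, ⊥ < f x)
    (x y : H) (hx : f x ≠ ⊤) (hy : f y ≠ ⊤)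
    (hgrad : HasGradientAt (fun z => (f z).toReal) (f' x) x) :
    (f x).toReal + ⟪f' x, y - x⟫ ≤ (f y).toReal := by
  set F : H → ℝ := fun z => (f z).toReal with hFdef
  set φ : ℝ → ℝ := fun t => F (x + t • (y - x)) with hφdef
  have hline : HasDerivAt (fun t : ℝ => x + t • (y - x)) (y - x) 0 := by
    simpa using ((hasDerivAt_id (0:ℝ)).smul_const (y - x)).const_add x
  have h0 : x + (0:ℝ) • (y - x) = x := by simp
  have hφ : HasDerivAt φ ⟪f' x, y - x⟫ 0 := by
    have h1' : HasFDerivAt F (InnerProductSpace.toDual ℝ H (f' x)) (x + (0:ℝ) • (y - x)) := by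
      rw [h0]; exact hgrad.hasFDerivAt
    have h2 := h1'.comp_hasDerivAt 0 hline
    simp only [InnerProductSpace.toDual_apply_apply] at h2
    exact h2
  have hIoc : Set.Ioc (0:ℝ) 1 ∈ 𝓝[>] (0:ℝ) :=
    Ioc_mem_nhdsGT_of_mem (by constructor <;> norm_num)
  have hmem : ∀ t ∈ Set.Ioc (0:ℝ) 1, slope φ 0 t ≤ F y - F x := by
    intro t ht
    obtain ⟨ht0, ht1⟩ := ht
    have hc := hconv x y (1 - t) t (by linarith) ht0.le (by ring)
    have hcomb : (1 - t) • x + t • y = x + t • (y - x) := by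
      rw [sub_smul, one_smul, smul_sub]; abel
    rw [hcomb] at hc
    have hfx : ((F x : ℝ) : EReal) = f x := EReal.coe_toReal hx (hbot x).ne'
    have hfy : ((F y : ℝ) : EReal) = f y := EReal.coe_toReal hy (hbot y).ne'
    have hcr : f (x + t • (y - x)) ≤ (((1 - t) * F x + t * F y : ℝ) : EReal) := by
      rw [EReal.coe_add, EReal.coe_mul, EReal.coe_mul, hfx, hfy]; exact hc
    have hφt : φ t ≤ (1 - t) * F x + t * F y := by
      have := EReal.toReal_le_toReal hcr (hbot _).ne' (EReal.coe_ne_top _)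
      rw [EReal.toReal_coe] at this
      simpa [hφdef, hFdef] using this
    have hφ0 : φ 0 = F x := by simp [hφdef, hFdef, h0]
    rw [slope_def_field, sub_zero, div_le_iff₀ ht0]
    rw [hφ0]
    linarith
  have htend : Tendsto (slope φ 0) (𝓝[>] 0) (𝓝 ⟪f' x, y - x⟫) :=
    (hasDerivAt_iff_tendsto_slope.mp hφ).mono_left
      (nhdsWithin_mono 0 (fun z hz => by simpa using (ne_of_gt hz)))
  have hfin := le_of_tendsto htend (eventually_of_mem hIoc hmem)
  linarith [hfin]

lemma prox_subgrad
    (g : H → EReal)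
    (hconv : ∀ x y : H, ∀ a b : ℝ, 0 ≤ a → 0 ≤ b → a + b = 1 →
      g (a • x + b • y) ≤ (a : EReal) * g x + (b : EReal) * g y)
    (hbot : ∀ x, ⊥ < g x)
    (s : ℝ) (hs : 0 < s) (z p : H) (hp : IsProxPt g s z p)
    (hpfin : g p ≠ ⊤) (y : H) (hyfin : g y ≠ ⊤) :
    (g p).toReal + ⟪z - p, y - p⟫ / s ≤ (g y).toReal := by
  set Gp := (g p).toReal with hGp
  set Gy := (g y).toReal with hGy
  have hgp : ((Gp : ℝ) : EReal) = g p := EReal.coe_toReal hpfin (hbot p).ne'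
  have hgy : ((Gy : ℝ) : EReal) = g y := EReal.coe_toReal hyfin (hbot y).ne'
  have main : ∀ t : ℝ, 0 < t → t ≤ 1 →
      Gp + ⟪z - p, y - p⟫ / s ≤ Gy + t * (‖y - p‖^2 / (2*s)) := by
    intro t ht ht1
    have hc := hconv p y (1 - t) t (by linarith) ht.le (by ring)
    have hq := hp ((1 - t) • p + t • y)
    have hcomb : (1 - t) • p + t • y = p + t • (y - p) := by
      rw [sub_smul, one_smul, smul_sub]; abel
    have hcr : g ((1 - t) • p + t • y) ≤ (((1 - t) * Gp + t * Gy : ℝ) : EReal) := by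
      rw [EReal.coe_add, EReal.coe_mul, EReal.coe_mul, hgp, hgy]; exact hc
    have hq' : (((Gp + (1 / (2 * s)) * ‖p - z‖ ^ 2 : ℝ)) : EReal)
        ≤ (((((1 - t) * Gp + t * Gy) + (1 / (2 * s)) * ‖(1 - t) • p + t • y - z‖ ^ 2 : ℝ)) : EReal) := by
      rw [EReal.coe_add, EReal.coe_add, hgp]
      calc g p + (((1 / (2 * s)) * ‖p - z‖ ^ 2 : ℝ) : EReal)
          ≤ g ((1-t)•p + t•y) + (((1 / (2 * s)) * ‖(1-t)•p + t•y - z‖ ^ 2 : ℝ) : EReal) := hq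
        _ ≤ _ := add_le_add hcr le_rfl
    rw [EReal.coe_le_coe_iff] at hq'
    have hexp : ‖(1 - t) • p + t • y - z‖ ^ 2
        = ‖p - z‖^2 + 2 * (t * ⟪p - z, y - p⟫) + t^2 * ‖y - p‖^2 := by
      rw [hcomb]
      have he : p + t • (y - p) - z = (p - z) + t • (y - p) := by abel
      rw [he, norm_add_sq_real, real_inner_smul_right, norm_smul]
      rw [Real.norm_eq_abs, mul_pow, sq_abs]
    rw [hexp] at hq'
    have hinner : ⟪z - p, y - p⟫ = -⟪p - z, y - p⟫ := by
      rw [show z - p = -(p - z) by abel, inner_neg_left]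
    rw [hinner, neg_div]
    have key : 0 ≤ t * ((Gy - Gp) + ⟪p - z, y - p⟫ / s + t * (‖y - p‖^2 / (2*s))) := by
      have hseq : t * ((Gy - Gp) + ⟪p - z, y - p⟫ / s + t * (‖y - p‖^2 / (2*s)))
          = ((1 - t) * Gp + t * Gy + 1 / (2 * s) * (‖p - z‖ ^ 2 + 2 * (t * ⟪p - z, y - p⟫)
              + t ^ 2 * ‖y - p‖ ^ 2)) - (Gp + 1 / (2 * s) * ‖p - z‖ ^ 2) := by
        field_simp
        ring
      rw [hseq]
      linarith
    have hA : 0 ≤ (Gy - Gp) + ⟪p - z, y - p⟫ / s + t * (‖y - p‖^2 / (2*s)) := by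
      have h0 : t * 0 ≤ t * ((Gy - Gp) + ⟪p - z, y - p⟫ / s + t * (‖y - p‖^2 / (2*s))) := by
        rw [mul_zero]; exact key
      exact le_of_mul_le_mul_left h0 ht
    linarith [hA]
  refine le_of_forall_pos_le_add fun ε hε => ?_
  have hK : (0:ℝ) ≤ ‖y - p‖^2 / (2*s) := by positivity
  set K := ‖y - p‖^2 / (2*s) with hKdef
  have htpos : 0 < min 1 (ε / (K + 1)) := lt_min one_pos (by positivity)
  have hmain := main _ htpos (min_le_left _ _)
  have hb : min 1 (ε / (K + 1)) * K ≤ ε := by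
    have h1 : min 1 (ε/(K+1)) ≤ ε / (K+1) := min_le_right _ _
    have h2 : min 1 (ε/(K+1)) * K ≤ (ε/(K+1)) * K := mul_le_mul_of_nonneg_right h1 hK
    have h3 : (ε/(K+1)) * K ≤ ε := by
      rw [div_mul_eq_mul_div, div_le_iff₀ (by positivity)]
      nlinarith [hε.le, hK]
    linarith
  linarith

lemma fb_step (f g : H → EReal) (f' : H → H)
    (hfconv : ∀ x y : H, ∀ a b : ℝ, 0 ≤ a → 0 ≤ b → a + b = 1 →
      f (a • x + b • y) ≤ (a : EReal) * f x + (b : EReal) * f y)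
    (hfbot : ∀ x, ⊥ < f x)
    (hgconv : ∀ x y : H, ∀ a b : ℝ, 0 ≤ a → 0 ≤ b → a + b = 1 →
      g (a • x + b • y) ≤ (a : EReal) * g x + (b : EReal) * g y)
    (hgbot : ∀ x, ⊥ < g x)
    (u v w : H) (s δ : ℝ) (hs : 0 < s)
    (hfu : f u ≠ ⊤) (hfv : f v ≠ ⊤) (hfw : f w ≠ ⊤)
    (hgv : g v ≠ ⊤) (hgw : g w ≠ ⊤)
    (hgradu : HasGradientAt (fun z => (f z).toReal) (f' u) u)
    (hgradv : HasGradientAt (fun z => (f z).toReal) (f' v) v)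
    (hprox : IsProxPt g s (u - s • f' u) v)
    (hls : s * ‖f' v - f' u‖ ≤ δ * ‖v - u‖) :
    s * (((f v).toReal + (g v).toReal) - ((f w).toReal + (g w).toReal)) ≤
      (1/2) * ‖u - w‖^2 - (1/2) * ‖v - w‖^2 + (δ - 1/2) * ‖v - u‖^2 := by
  have h1 := prox_subgrad g hgconv hgbot s hs _ v hprox hgv w hgw
  have e2 : ⟪u - s • f' u - v, w - v⟫ = ⟪u - v, w - v⟫ - s * ⟪f' u, w - v⟫ := by
    rw [show u - s • f' u - v = (u - v) - s • f' u by abel, inner_sub_left,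
      real_inner_smul_left]
  rw [e2] at h1
  have h1s : ⟪u - v, w - v⟫ - s * ⟪f' u, w - v⟫ ≤ ((g w).toReal - (g v).toReal) * s :=
    (div_le_iff₀ hs).mp (by linarith)
  have h2 := grad_convex_ineq f f' hfconv hfbot v u hfv hfu hgradv
  have h3 := grad_convex_ineq f f' hfconv hfbot u w hfu hfw hgradu
  have h4 : s * ⟪f' v - f' u, v - u⟫ ≤ δ * ‖v - u‖^2 := by
    nlinarith [mul_le_mul_of_nonneg_right hls (norm_nonneg (v - u)),
      mul_le_mul_of_nonneg_left (real_inner_le_norm (f' v - f' u) (v - u)) hs.le]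
  have sE2 : s * ⟪f' v - f' u, v - u⟫ = s * ⟪f' v, v - u⟫ - s * ⟪f' u, v - u⟫ := by
    rw [inner_sub_left]; ring
  have sE3 : s * ⟪f' u, w - v⟫ = s * ⟪f' u, w - u⟫ - s * ⟪f' u, v - u⟫ := by
    rw [show w - v = (w - u) - (v - u) by abel, inner_sub_right]; ring
  have sE4 : s * ⟪f' v, u - v⟫ = -(s * ⟪f' v, v - u⟫) := by
    rw [show u - v = -(v - u) by abel, inner_neg_right]; ring
  have E5 : ‖u - w‖^2 = ‖v - w‖^2 + 2*⟪v - w, u - v⟫ + ‖u - v‖^2 := by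
    have h := norm_add_sq_real (v - w) (u - v)
    rw [show v - w + (u - v) = u - w by abel] at h
    exact h
  have E6 : ⟪u - v, w - v⟫ = -⟪v - w, u - v⟫ := by
    rw [show w - v = -(v - w) by abel, inner_neg_right, real_inner_comm]
  have E7 : ‖u - v‖^2 = ‖v - u‖^2 := by rw [norm_sub_rev]
  have mulh2 := mul_le_mul_of_nonneg_left h2 hs.le
  have mulh3 := mul_le_mul_of_nonneg_left h3 hs.le
  rw [mul_add] at mulh2 mulh3
  linarith [h1s, mulh2, mulh3, h4, sE2, sE3, sE4, E5, E6, E7]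

/-- Theorem 4.2, first part: if the iterates satisfy the forward-backward
step with the linesearch inequality and the stepsizes are bounded below by `α > 0`, then
`(f+g)(xᵏ) − min(f+g) ≤ (1/(2α))·dist(x⁰,S⁎)²/k` for every `k ≥ 1`. -/
theorem stmt8
    (f g : H → EReal) (f' : H → H)
    (hf : ProperLscConvex f) (hg : ProperLscConvex g)
    (hdom : edom g ⊆ edom f)
    (hdiff : GradOnOpenSupset f f' (edom g))
    (δ : ℝ) (hδ : δ ∈ Set.Ioo (0 : ℝ) (1 / 2))
    (x : ℕ → H) (a : ℕ → ℝ)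
    (hxdom : ∀ k : ℕ, x k ∈ edom g)
    (hiter : ∀ k : ℕ, IsProxPt g (a k) (x k - a k • f' (x k)) (x (k + 1)))
    (hls : ∀ k : ℕ, a k * ‖f' (x (k + 1)) - f' (x k)‖ ≤ δ * ‖x (k + 1) - x k‖)
    (hS : (argminSet f g).Nonempty)
    (α : ℝ) (hα : 0 < α) (hak : ∀ k : ℕ, α ≤ a k) :
    ∀ k : ℕ, 1 ≤ k →
      (f (x k) + g (x k)) - (⨅ y, f y + g y)
        ≤ (((1 / (2 * α)) * (Metric.infDist (x 0) (argminSet f g)) ^ 2 / k : ℝ) : EReal) := by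
  obtain ⟨U, hUopen, hUsub, hU⟩ := hdiff
  obtain ⟨x', hx'⟩ := hS
  have hfbot := hf.2.1
  have hgbot := hg.2.1
  have hfconv := hf.2.2.2
  have hgconv := hg.2.2.2
  have hsa : ∀ n, 0 < a n := fun n => lt_of_lt_of_le hα (hak n)
  have hgfin : ∀ n, g (x n) ≠ ⊤ := fun n => LT.lt.ne (hxdom n)
  have hffin : ∀ n, f (x n) ≠ ⊤ := fun n => LT.lt.ne (hdom (hxdom n))
  have hgrad : ∀ n, HasGradientAt (fun z => (f z).toReal) (f' (x n)) (x n) :=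
    fun n => (hU _ (hUsub (hxdom n))).2
  -- finiteness of minimizer values
  have hminfin : ∀ p ∈ argminSet f g, f p ≠ ⊤ ∧ g p ≠ ⊤ := by
    intro p hp
    have hle : f p + g p ≤ f (x 0) + g (x 0) := hp (x 0)
    have htop : f p + g p ≠ ⊤ :=
      (lt_of_le_of_lt hle (EReal.add_lt_top (hffin 0) (hgfin 0))).ne
    constructor
    · intro h; exact htop (by rw [h]; exact EReal.top_add_of_ne_bot (hgbot p).ne')
    · intro h; exact htop (by rw [h]; exact EReal.add_top_of_ne_bot (hfbot p).ne')
  -- per-step inequality, applied to a point y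
  have step : ∀ (j : ℕ) (y : H), f y ≠ ⊤ → g y ≠ ⊤ →
      a j * ((((f (x (j+1))).toReal + (g (x (j+1))).toReal))
          - ((f y).toReal + (g y).toReal)) ≤
        (1/2) * ‖x j - y‖^2 - (1/2) * ‖x (j+1) - y‖^2
          + (δ - 1/2) * ‖x (j+1) - x j‖^2 :=
    fun j y hfy hgy =>
      fb_step f g f' hfconv hfbot hgconv hgbot (x j) (x (j+1)) y (a j) δ (hsa j)
        (hffin j) (hffin (j+1)) hfy (hgfin (j+1)) hgy (hgrad j) (hgrad (j+1))
        (hiter j) (hls j)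
  -- monotone decrease
  have mono : ∀ j : ℕ, (f (x (j+1))).toReal + (g (x (j+1))).toReal
      ≤ (f (x j)).toReal + (g (x j)).toReal := by
    intro j
    have h := step j (x j) (hffin j) (hgfin j)
    have hz : ‖x j - x j‖ = 0 := by simp
    rw [hz] at h
    nlinarith [h, hsa j, sq_nonneg ‖x (j+1) - x j‖, hδ.2,
      norm_sub_rev (x (j+1)) (x j), sq_nonneg ‖x j - x (j+1)‖]
  have mono' : ∀ m n : ℕ, m ≤ n → (f (x n)).toReal + (g (x n)).toReal
      ≤ (f (x m)).toReal + (g (x m)).toReal := by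
    intro m n hmn
    induction n with
    | zero => simp at hmn; simp [hmn]
    | succ i ih =>
      rcases Nat.lt_or_ge m (i+1) with h | h
      · exact le_trans (mono i) (ih (Nat.lt_succ_iff.mp h))
      · have : m = i + 1 := le_antisymm hmn h
        simp [this]
  -- value of any minimizer below iterates
  have hlow : ∀ p ∈ argminSet f g, ∀ n : ℕ,
      (f p).toReal + (g p).toReal ≤ (f (x n)).toReal + (g (x n)).toReal := by
    intro p hp n
    obtain ⟨hfp, hgp⟩ := hminfin p hp
    have hle : f p + g p ≤ f (x n) + g (x n) := hp (x n)
    have h1 : (f p + g p).toReal ≤ (f (x n) + g (x n)).toReal := by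
      apply EReal.toReal_le_toReal hle
      · intro h
        rcases EReal.add_eq_bot_iff.mp h with h' | h'
        · exact (hfbot p).ne' h'
        · exact (hgbot p).ne' h'
      · exact (EReal.add_lt_top (hffin n) (hgfin n)).ne
    rw [EReal.toReal_add hfp (hfbot p).ne' hgp (hgbot p).ne',
      EReal.toReal_add (hffin n) (hfbot (x n)).ne' (hgfin n) (hgbot (x n)).ne'] at h1
    exact h1
  -- telescoping
  have tel : ∀ p ∈ argminSet f g, ∀ n : ℕ,
      (n : ℝ) * (α * (((f (x n)).toReal + (g (x n)).toReal)
        - ((f p).toReal + (g p).toReal))) ≤ (1/2) * ‖x 0 - p‖^2 := by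
    intro p hp
    obtain ⟨hfp, hgp⟩ := hminfin p hp
    have key : ∀ n : ℕ, (n : ℝ) * (α * (((f (x n)).toReal + (g (x n)).toReal)
        - ((f p).toReal + (g p).toReal)))
        ≤ (1/2) * ‖x 0 - p‖^2 - (1/2) * ‖x n - p‖^2 := by
      intro n
      induction n with
      | zero => simp
      | succ m ih =>
        have h := step m p hfp hgp
        have hterm : (δ - 1/2) * ‖x (m+1) - x m‖^2 ≤ 0 :=
          mul_nonpos_of_nonpos_of_nonneg (by linarith [hδ.2]) (sq_nonneg _)
        have hnn : 0 ≤ ((f (x (m+1))).toReal + (g (x (m+1))).toReal)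
            - ((f p).toReal + (g p).toReal) := by linarith [hlow p hp (m+1)]
        have h1 : α * (((f (x (m+1))).toReal + (g (x (m+1))).toReal)
            - ((f p).toReal + (g p).toReal))
            ≤ a m * (((f (x (m+1))).toReal + (g (x (m+1))).toReal)
            - ((f p).toReal + (g p).toReal)) :=
          mul_le_mul_of_nonneg_right (hak m) hnn
        have h3 : (m:ℝ) * (α * (((f (x (m+1))).toReal + (g (x (m+1))).toReal)
            - ((f p).toReal + (g p).toReal)))
            ≤ (m:ℝ) * (α * (((f (x m)).toReal + (g (x m)).toReal)
            - ((f p).toReal + (g p).toReal))) := by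
          apply mul_le_mul_of_nonneg_left _ (Nat.cast_nonneg m)
          apply mul_le_mul_of_nonneg_left _ hα.le
          linarith [mono m]
        push_cast
        nlinarith [h, ih, h1, h3, hterm]
    intro n
    calc _ ≤ (1/2) * ‖x 0 - p‖^2 - (1/2) * ‖x n - p‖^2 := key n
      _ ≤ (1/2) * ‖x 0 - p‖^2 := by nlinarith [sq_nonneg ‖x n - p‖]
  -- now conclude
  intro k hk
  have hkpos : (0:ℝ) < k := by exact_mod_cast hk
  -- the common optimal value
  have hval : ∀ p ∈ argminSet f g, f p + g p = f x' + g x' :=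
    fun p hp => le_antisymm (hp x') (hx' p)
  obtain ⟨hfx', hgx'⟩ := hminfin x' hx'
  set Fk : ℝ := (f (x k)).toReal + (g (x k)).toReal with hFk
  set Fs : ℝ := (f x').toReal + (g x').toReal with hFs
  clear_value Fk Fs
  have hFsle : Fs ≤ Fk := by rw [hFk, hFs]; exact hlow x' hx' k
  set d : ℝ := Metric.infDist (x 0) (argminSet f g) with hd
  clear_value d
  -- bound 2αk (Fk - Fs) ≤ d^2
  have hbound : 2 * α * (k:ℝ) * (Fk - Fs) ≤ d^2 := by
    set C : ℝ := 2 * α * (k:ℝ) * (Fk - Fs) with hC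
    clear_value C
    have hCnn : 0 ≤ C := by
      rw [hC]
      exact mul_nonneg (mul_nonneg (mul_nonneg (by norm_num) hα.le) hkpos.le)
        (by linarith)
    have hCle : ∀ p ∈ argminSet f g, C ≤ dist (x 0) p ^ 2 := by
      intro p hp
      have hteln := tel p hp k
      have hvp : (f p).toReal + (g p).toReal = Fs := by
        obtain ⟨hfp, hgp⟩ := hminfin p hp
        have := hval p hp
        calc (f p).toReal + (g p).toReal
            = (f p + g p).toReal := (EReal.toReal_add hfp (hfbot p).ne' hgp (hgbot p).ne').symm
          _ = (f x' + g x').toReal := by rw [this]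
          _ = Fs := by
              rw [hFs]
              exact EReal.toReal_add hfx' (hfbot x').ne' hgx' (hgbot x').ne'
      rw [hvp] at hteln
      rw [dist_eq_norm, hC, hFk]
      linarith [hteln]
    have hsq : Real.sqrt C ≤ d := by
      by_contra hcon
      push_neg at hcon
      rw [hd] at hcon
      obtain ⟨p, hp, hdp⟩ := (Metric.infDist_lt_iff ⟨x', hx'⟩).mp hcon
      have h1 : dist (x 0) p ^ 2 < Real.sqrt C ^ 2 := by
        apply pow_lt_pow_left₀ hdp dist_nonneg
        norm_num
      rw [Real.sq_sqrt hCnn] at h1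
      exact absurd (hCle p hp) (not_le.mpr h1)
    calc C = Real.sqrt C ^ 2 := (Real.sq_sqrt hCnn).symm
      _ ≤ d ^ 2 := by
        apply pow_le_pow_left₀ (Real.sqrt_nonneg _) hsq
  -- real-valued final inequality
  have hreal : Fk - Fs ≤ 1 / (2 * α) * d ^ 2 / (k:ℝ) := by
    rw [show 1 / (2 * α) * d ^ 2 / (k:ℝ) = d^2 / (2 * α * (k:ℝ)) by field_simp]
    rw [le_div_iff₀ (by positivity)]
    nlinarith [hbound]
  -- convert to EReal
  have hiinf : (⨅ y, f y + g y) = f x' + g x' :=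
    le_antisymm (iInf_le _ x') (le_iInf hx')
  rw [hiinf]
  have e1 : f (x k) + g (x k) = ((Fk : ℝ) : EReal) := by
    rw [hFk, EReal.coe_add, EReal.coe_toReal (hffin k) (hfbot (x k)).ne',
      EReal.coe_toReal (hgfin k) (hgbot (x k)).ne']
  have e2 : f x' + g x' = ((Fs : ℝ) : EReal) := by
    rw [hFs, EReal.coe_add, EReal.coe_toReal hfx' (hfbot x').ne',
      EReal.coe_toReal hgx' (hgbot x').ne']
  rw [e1, e2, ← EReal.coe_sub, EReal.coe_le_coe_iff]
  exact hreal
end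
end

section
/- Let H be a finite-dimensional real Hilbert space and let f, g : H → ℝ ∪ {+∞} satisfy Assumptions A1–A2 (f, g proper, lower semicontinuous, convex, dom g ⊆ dom f, f Fréchet differentiable on an open set containing dom g, ∇f uniformly continuous on bounded subsets of dom g and mapping bounded subsets of dom g to bounded sets). Let (x^k) and (α_k) be generated by the forward-backward method with Linesearch 1 (x⁰ ∈ dom g, σ > 0, θ ∈ (0,1), δ ∈ (0,1/2), α_k the largest α ∈ {σθⁿ : n ≥ 0} with α‖∇f(J(x^k,α)) − ∇f(x^k)‖ ≤ δ‖J(x^k,α) − x^k‖, x^{k+1} = J(x^k, α_k)). Suppose the set S* of minimizers of f+g is nonempty and α_k ≥ α > 0 for all k. Then lim_{k→∞} k·[(f+g)(x^k) − min_{x∈H}(f+g)(x)] = 0. -/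
open Set Filter Topology Bornology RealInnerProductSpace

noncomputable section

variable {H : Type*} [NormedAddCommGroup H] [InnerProductSpace ℝ H] [CompleteSpace H]

section AuxLemmas

open Finset in
/-- If `e` is nonnegative, nonincreasing, and has bounded partial sums, then `n * e n → 0`. -/
theorem nat_mul_tendsto_zero' {e : ℕ → ℝ} (hnn : ∀ n, 0 ≤ e n)
    (hmono : ∀ n, e (n + 1) ≤ e n) (C : ℝ)
    (hsum : ∀ n, ∑ i ∈ Finset.range n, e i ≤ C) :
    Tendsto (fun n : ℕ => (n : ℝ) * e n) atTop (𝓝 0) := by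
  have hanti : ∀ {i j : ℕ}, i ≤ j → e j ≤ e i := by
    intro i j hij
    induction j with
    | zero => simp [Nat.le_zero.mp hij]
    | succ n ih =>
      rcases Nat.lt_or_ge i (n+1) with h | h
      · exact le_trans (hmono n) (ih (Nat.lt_succ_iff.mp h))
      · have : i = n + 1 := le_antisymm hij h
        simp [this]
  set S : ℕ → ℝ := fun n => ∑ i ∈ Finset.range n, e i with hS
  have hSmono : Monotone S := by
    intro m n hmn
    exact Finset.sum_le_sum_of_subset_of_nonneg (Finset.range_subset_range.mpr hmn)
      (fun i _ _ => hnn i)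
  have hbdd : BddAbove (Set.range S) := ⟨C, by rintro _ ⟨n, rfl⟩; exact hsum n⟩
  have hconv : Tendsto S atTop (𝓝 (⨆ n, S n)) := tendsto_atTop_ciSup hSmono hbdd
  have hhalf : Tendsto (fun n : ℕ => S (n / 2)) atTop (𝓝 (⨆ n, S n)) :=
    hconv.comp (tendsto_atTop_atTop.mpr fun b => ⟨2 * b, fun a ha => by omega⟩)
  have hdiff : Tendsto (fun n : ℕ => 2 * (S n - S (n / 2))) atTop (𝓝 0) := by
    have := (hconv.sub hhalf).const_mul (2:ℝ)
    simpa using this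
  apply squeeze_zero (fun n => mul_nonneg (Nat.cast_nonneg n) (hnn n)) _ hdiff
  intro n
  have hcard : (n - n / 2 : ℕ) • e n ≤ ∑ i ∈ Finset.Ico (n / 2) n, e i := by
    have := Finset.card_nsmul_le_sum (Finset.Ico (n / 2) n) e (e n)
      (fun i hi => hanti (Finset.mem_Ico.mp hi).2.le)
    simpa [Nat.card_Ico] using this
  have hsplit : ∑ i ∈ Finset.Ico (n / 2) n, e i = S n - S (n / 2) := by
    rw [hS]
    rw [← Finset.sum_Ico_eq_sub _ (Nat.div_le_self n 2)]
  have h1 : ((n - n / 2 : ℕ) : ℝ) * e n ≤ S n - S (n / 2) := by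
    rw [← hsplit]
    simpa [nsmul_eq_mul] using hcard
  have h2 : (n : ℝ) ≤ 2 * ((n - n / 2 : ℕ) : ℝ) := by
    have : n ≤ 2 * (n - n / 2) := by omega
    exact_mod_cast this
  nlinarith [hnn n, mul_le_mul_of_nonneg_right h2 (hnn n)]

variable {H : Type*} [NormedAddCommGroup H] [InnerProductSpace ℝ H] [CompleteSpace H]

theorem line_deriv' (φ : H → ℝ) (v x y : H) (h : HasGradientAt φ v x) :
    HasDerivAt (fun t : ℝ => φ (x + t • (y - x))) ⟪v, y - x⟫ 0 := by
  have hline : HasDerivAt (fun t : ℝ => x + t • (y - x)) (y - x) 0 := by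
    simpa using ((hasDerivAt_id (0:ℝ)).smul_const (y - x)).const_add x
  have hfd : HasFDerivAt φ ((InnerProductSpace.toDual ℝ H) v) (x + (0:ℝ) • (y - x)) := by
    simpa using h.hasFDerivAt
  have hc := hfd.comp_hasDerivAt 0 hline
  simp at hc
  exact hc

/-- Convexity + gradient gives the subgradient inequality, in real form. -/
theorem grad_convex' {f : H → EReal} (hf : ProperLscConvex f) {x v : H}
    (hx : f x ≠ ⊤) (hd : HasGradientAt (fun y => (f y).toReal) v x)
    (y : H) (hy : f y ≠ ⊤) :
    (f x).toReal + ⟪v, y - x⟫ ≤ (f y).toReal := by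
  set fx := (f x).toReal
  set fy := (f y).toReal
  have hbot := hf.2.1
  have hfx : f x = (fx : EReal) := (EReal.coe_toReal hx (hbot x).ne').symm
  have hfy : f y = (fy : EReal) := (EReal.coe_toReal hy (hbot y).ne').symm
  have hslope : ∀ t : ℝ, t ∈ Ioc (0:ℝ) 1 →
      ((fun s : ℝ => (f (x + s • (y - x))).toReal) t -
        (fun s : ℝ => (f (x + s • (y - x))).toReal) 0) / t ≤ fy - fx := by
    intro t ht
    have ht0 := ht.1
    have hpt : x + t • (y - x) = (1 - t) • x + t • y := by
      rw [sub_smul, smul_sub, one_smul]; abel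
    have hcv := hf.2.2.2 x y (1 - t) t (by linarith [ht.2]) ht0.le (by ring)
    rw [← hpt, hfx, hfy] at hcv
    have hcv' : f (x + t • (y - x)) ≤ (((1 - t) * fx + t * fy : ℝ) : EReal) := by
      rw [EReal.coe_add, EReal.coe_mul, EReal.coe_mul] at *; exact hcv
    have hne : f (x + t • (y - x)) ≠ ⊤ := (lt_of_le_of_lt hcv' (EReal.coe_lt_top _)).ne
    have hreal : (f (x + t • (y - x))).toReal ≤ (1 - t) * fx + t * fy := by
      have := EReal.toReal_le_toReal hcv' (hbot _).ne' (EReal.coe_ne_top _)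
      simpa only [EReal.toReal_coe] using this
    have h0 : (f (x + (0:ℝ) • (y - x))).toReal = fx := by simp [fx]
    show ((f (x + t • (y - x))).toReal - (f (x + (0:ℝ) • (y - x))).toReal) / t ≤ fy - fx
    rw [h0, div_le_iff₀ ht0]
    nlinarith
  have hderiv := line_deriv' (fun y => (f y).toReal) v x y hd
  have hslopet : Tendsto (slope (fun s : ℝ => (f (x + s • (y - x))).toReal) 0)
      (𝓝[>] 0) (𝓝 ⟪v, y - x⟫) :=
    ((hasDerivAt_iff_tendsto_slope.mp hderiv).mono_left
      (nhdsWithin_mono 0 fun s hs => ne_of_gt hs))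
  have hlim : ⟪v, y - x⟫ ≤ fy - fx := by
    refine le_of_tendsto hslopet ?_
    filter_upwards [Ioc_mem_nhdsGT_of_mem (by norm_num : (0:ℝ) ∈ Ico (0:ℝ) 1)] with t ht
    have := hslope t ht
    simpa [slope_def_field, div_eq_inv_mul] using this
  linarith

omit [CompleteSpace H] in
/-- The prox point is in the domain of `g`. -/
theorem prox_mem_edom' {g : H → EReal} (hg : ProperLscConvex g) {α : ℝ} {z p : H}
    (hp : IsProxPt g α z p) : g p ≠ ⊤ := by
  obtain ⟨x0, hx0⟩ := hg.1
  have := hp x0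
  intro htop
  rw [htop] at this
  have h1 : g x0 + (((1 / (2 * α)) * ‖x0 - z‖ ^ 2 : ℝ) : EReal) < ⊤ :=
    EReal.add_lt_top hx0.ne (EReal.coe_ne_top _)
  have h2 : (⊤ : EReal) + (((1 / (2 * α)) * ‖p - z‖ ^ 2 : ℝ) : EReal) = ⊤ := by
    rw [EReal.top_add_of_ne_bot (EReal.coe_ne_bot _)]
  rw [h2] at this
  exact (not_le.mpr h1) this

omit [CompleteSpace H] in
/-- Prox subgradient inequality, real form. -/
theorem prox_subgrad' {g : H → EReal} (hg : ProperLscConvex g) {α : ℝ} (hα : 0 < α)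
    {z p : H} (hp : IsProxPt g α z p) (y : H) (hy : g y ≠ ⊤) :
    (g p).toReal + (1 / α) * ⟪z - p, y - p⟫ ≤ (g y).toReal := by
  have hbot := hg.2.1
  have hptop := prox_mem_edom' hg hp
  set gp := (g p).toReal
  set gy := (g y).toReal
  have hgp : g p = (gp : EReal) := (EReal.coe_toReal hptop (hbot p).ne').symm
  have hgy : g y = (gy : EReal) := (EReal.coe_toReal hy (hbot y).ne').symm
  set c : ℝ := 1 / (2 * α) with hc
  have hcpos : 0 < c := by positivity
  have key : ∀ t : ℝ, t ∈ Ioc (0:ℝ) 1 →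
      0 ≤ (gy - gp) - 2 * c * ⟪z - p, y - p⟫ + t * c * ‖y - p‖ ^ 2 := by
    intro t ht
    have ht0 := ht.1
    set q := p + t • (y - p) with hq
    have hqe : q = (1 - t) • p + t • y := by
      rw [hq, sub_smul, smul_sub, one_smul]; abel
    have hcv := hg.2.2.2 p y (1 - t) t (by linarith [ht.2]) ht0.le (by ring)
    rw [← hqe, hgp, hgy] at hcv
    have hcv' : g q ≤ (((1 - t) * gp + t * gy : ℝ) : EReal) := by
      rw [EReal.coe_add, EReal.coe_mul, EReal.coe_mul]; exact hcv
    have hqtop : g q ≠ ⊤ := (lt_of_le_of_lt hcv' (EReal.coe_lt_top _)).ne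
    have hqreal : (g q).toReal ≤ (1 - t) * gp + t * gy := by
      simpa only [EReal.toReal_coe] using EReal.toReal_le_toReal hcv' (hbot _).ne' (EReal.coe_ne_top _)
    have hpq := hp q
    rw [hgp, (EReal.coe_toReal hqtop (hbot q).ne').symm, ← EReal.coe_add, ← EReal.coe_add]
      at hpq
    have hpqr : gp + c * ‖p - z‖ ^ 2 ≤ (g q).toReal + c * ‖q - z‖ ^ 2 :=
      EReal.coe_le_coe_iff.mp hpq
    have hexp : ‖q - z‖ ^ 2 = ‖p - z‖ ^ 2 + 2 * t * ⟪p - z, y - p⟫ + t ^ 2 * ‖y - p‖ ^ 2 := by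
      have : q - z = (p - z) + t • (y - p) := by rw [hq]; abel
      rw [this, @norm_add_sq_real, real_inner_smul_right, norm_smul]
      simp [mul_pow, abs_of_pos ht0]
      ring
    have hinner : ⟪p - z, y - p⟫ = - ⟪z - p, y - p⟫ := by
      rw [← inner_neg_left]; congr 1; abel
    have hcomb : gp + c * ‖p - z‖ ^ 2 ≤ (1 - t) * gp + t * gy + c * ‖q - z‖ ^ 2 := by
      linarith
    rw [hexp, hinner] at hcomb
    have h3 : 0 ≤ t * ((gy - gp) - 2 * c * ⟪z - p, y - p⟫ + t * c * ‖y - p‖ ^ 2) := by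
      nlinarith
    nlinarith [mul_pos ht0 ht0, sq_nonneg t]
  have hA : 0 ≤ (gy - gp) - 2 * c * ⟪z - p, y - p⟫ := by
    by_contra hcon
    push_neg at hcon
    set A := (gy - gp) - 2 * c * ⟪z - p, y - p⟫ with hAdef
    set B := c * ‖y - p‖ ^ 2 with hB
    have hB0 : 0 ≤ B := by positivity
    rcases eq_or_lt_of_le hB0 with hB0' | hB0'
    · have h1 := key 1 (by norm_num)
      nlinarith
    · set t := min 1 (-A / (2 * B)) with htdef
      have htpos : 0 < t := lt_min one_pos (div_pos (neg_pos.mpr hcon) (by positivity))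
      have hkey := key t ⟨htpos, min_le_left _ _⟩
      have htle : t ≤ -A / (2 * B) := min_le_right _ _
      have hmul : t * B ≤ (-A / (2 * B)) * B := mul_le_mul_of_nonneg_right htle hB0'.le
      have hval : (-A / (2 * B)) * B = -A / 2 := by field_simp
      nlinarith
  have h2c : 2 * c = 1 / α := by rw [hc]; field_simp
  have hrw : (1 / α) * ⟪z - p, y - p⟫ = 2 * c * ⟪z - p, y - p⟫ := by rw [h2c]
  linarith

end AuxLemmas

/-- Theorem 4.2, second part: in finite dimensions, if the Method-1
stepsizes are bounded below by `α > 0` and `S⁎ ≠ ∅`, then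
`k·[(f+g)(xᵏ) − min(f+g)] → 0`. -/


theorem stmt9 [FiniteDimensional ℝ H]
    (f g : H → EReal) (f' : H → H) (prox : ℝ → H → H)
    (hf : ProperLscConvex f) (hg : ProperLscConvex g)
    (hdom : edom g ⊆ edom f)
    (hdiff : GradOnOpenSupset f f' (edom g))
    (hA2 : UCBddOnBounded g f')
    (hprox : ∀ α : ℝ, 0 < α → ∀ z : H, IsProxPt g α z (prox α z))
    (J : H → ℝ → H) (hJ : ∀ (x : H) (α : ℝ), J x α = prox α (x - α • f' x))
    (σ θ δ : ℝ) (hσ : 0 < σ) (hθ : θ ∈ Set.Ioo (0 : ℝ) 1)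
    (hδ : δ ∈ Set.Ioo (0 : ℝ) (1 / 2))
    (x : ℕ → H) (a : ℕ → ℝ)
    (hx0 : x 0 ∈ edom g)
    (hls : ∀ k : ℕ, LS1Step f' J δ σ θ (x k) (a k))
    (hiter : ∀ k : ℕ, x (k + 1) = J (x k) (a k))
    (hS : (argminSet f g).Nonempty)
    (α : ℝ) (hα : 0 < α) (hak : ∀ k : ℕ, α ≤ a k) :
    Tendsto (fun k : ℕ => (k : EReal) * ((f (x k) + g (x k)) - ⨅ y, f y + g y))
      atTop (nhds 0) := by
  obtain ⟨xs, hxs⟩ := hS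
  have hbotf := hf.2.1
  have hbotg := hg.2.1
  obtain ⟨U, hUopen, hUsub, hUgrad⟩ := hdiff
  have hpos : ∀ k, 0 < a k := fun k => lt_of_lt_of_le hα (hak k)
  -- iterates stay in dom g
  have hgdom : ∀ k, g (x k) ≠ ⊤ := by
    intro k
    induction k with
    | zero => exact hx0.ne
    | succ n _ =>
      rw [hiter n, hJ]
      exact prox_mem_edom' hg (hprox (a n) (hpos n) _)
  have hmemg : ∀ k, x k ∈ edom g := fun k => lt_top_iff_ne_top.mpr (hgdom k)
  have hfdom : ∀ k, f (x k) ≠ ⊤ := fun k => (hdom (hmemg k)).ne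
  have hgrad : ∀ k, HasGradientAt (fun y => (f y).toReal) (f' (x k)) (x k) :=
    fun k => (hUgrad _ (hUsub (hmemg k))).2
  -- finiteness at the minimizer
  have hFx0 : f (x 0) + g (x 0) ≠ ⊤ :=
    (EReal.add_lt_top (hfdom 0) (hgdom 0)).ne
  have hFxs : f xs + g xs ≠ ⊤ := ne_top_of_le_ne_top hFx0 (hxs (x 0))
  have hfxs : f xs ≠ ⊤ := by
    intro h
    rw [h, EReal.top_add_of_ne_bot (hbotg xs).ne'] at hFxs
    exact hFxs rfl
  have hgxs : g xs ≠ ⊤ := by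
    intro h
    rw [h, EReal.add_top_of_ne_bot (hbotf xs).ne'] at hFxs
    exact hFxs rfl
  -- real-valued objective
  set Fr : ℕ → ℝ := fun k => (f (x k)).toReal + (g (x k)).toReal with hFr
  set Fs : ℝ := (f xs).toReal + (g xs).toReal with hFs
  have coeF : ∀ k, f (x k) + g (x k) = ((Fr k : ℝ) : EReal) := by
    intro k
    rw [hFr]
    rw [EReal.coe_add, EReal.coe_toReal (hfdom k) (hbotf _).ne',
      EReal.coe_toReal (hgdom k) (hbotg _).ne']
  have coeFs : f xs + g xs = ((Fs : ℝ) : EReal) := by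
    rw [hFs, EReal.coe_add, EReal.coe_toReal hfxs (hbotf _).ne',
      EReal.coe_toReal hgxs (hbotg _).ne']
  -- the key per-step inequality
  have key : ∀ k (y : H), f y ≠ ⊤ → g y ≠ ⊤ →
      2 * a k * (Fr (k+1) - ((f y).toReal + (g y).toReal)) ≤
        ‖x k - y‖^2 - ‖x (k+1) - y‖^2 - (1 - 2*δ) * ‖x (k+1) - x k‖^2 := by
    intro k y hfy hgy
    have hakpos := hpos k
    have h1 := grad_convex' hf (hfdom (k+1)) (hgrad (k+1)) (x k) (hfdom k)
    have h2 := grad_convex' hf (hfdom k) (hgrad k) y hfy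
    have hxk1 : x (k+1) = prox (a k) (x k - a k • f' (x k)) := by rw [hiter k, hJ]
    have hp : IsProxPt g (a k) (x k - a k • f' (x k)) (x (k+1)) :=
      hxk1 ▸ hprox (a k) hakpos _
    have h3 := prox_subgrad' hg hakpos hp y hgy
    -- linesearch bound
    obtain ⟨n, -, hLS, -⟩ := hls k
    rw [LS1, ← hiter k] at hLS
    -- abbreviations / expansions
    have hzexp : ⟪x k - a k • f' (x k) - x (k+1), y - x (k+1)⟫ =
        ⟪x k - x (k+1), y - x (k+1)⟫ - a k * ⟪f' (x k), y - x (k+1)⟫ := by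
      rw [show x k - a k • f' (x k) - x (k+1) = (x k - x (k+1)) - a k • f' (x k) from by abel,
        inner_sub_left, real_inner_smul_left]
    rw [hzexp] at h3
    have hsplit : ⟪f' (x (k+1)), x k - x (k+1)⟫ =
        ⟪f' (x k), x k - x (k+1)⟫ + ⟪f' (x (k+1)) - f' (x k), x k - x (k+1)⟫ := by
      rw [inner_sub_left]; ring
    rw [hsplit] at h1
    -- bound the error inner product
    have hR : -(δ * ‖x (k+1) - x k‖^2) ≤ a k * ⟪f' (x (k+1)) - f' (x k), x k - x (k+1)⟫ := by
      have hCS := real_inner_le_norm (f' (x (k+1)) - f' (x k)) (x (k+1) - x k)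
      have hflip : ⟪f' (x (k+1)) - f' (x k), x k - x (k+1)⟫ =
          -⟪f' (x (k+1)) - f' (x k), x (k+1) - x k⟫ := by
        rw [show x k - x (k+1) = -(x (k+1) - x k) from by abel, inner_neg_right]
      have hCS' := mul_le_mul_of_nonneg_left hCS hakpos.le
      have hLS' := mul_le_mul_of_nonneg_right hLS (norm_nonneg (x (k+1) - x k))
      rw [hflip]
      nlinarith [norm_nonneg (x (k+1) - x k)]
    -- multiply everything by a k
    have h1' := mul_le_mul_of_nonneg_left h1 hakpos.le
    have h2' := mul_le_mul_of_nonneg_left h2 hakpos.le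
    have h3' := mul_le_mul_of_nonneg_left h3 hakpos.le
    have hdistrib : a k * ((g (x (k+1))).toReal + 1 / a k *
        (⟪x k - x (k+1), y - x (k+1)⟫ - a k * ⟪f' (x k), y - x (k+1)⟫)) =
        a k * (g (x (k+1))).toReal +
          (⟪x k - x (k+1), y - x (k+1)⟫ - a k * ⟪f' (x k), y - x (k+1)⟫) := by
      field_simp
    rw [hdistrib] at h3'
    -- cancellation of the ⟪f' (x k), ·⟫ terms
    have hvcancel : ⟪f' (x k), x k - x (k+1)⟫ + ⟪f' (x k), y - x k⟫
        - ⟪f' (x k), y - x (k+1)⟫ = 0 := by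
      simp only [inner_sub_right]; ring
    have hvc' : a k * ⟪f' (x k), x k - x (k+1)⟫ + a k * ⟪f' (x k), y - x k⟫
        - a k * ⟪f' (x k), y - x (k+1)⟫ = 0 := by
      linear_combination (a k) * hvcancel
    -- parallelogram-type identity
    have hpar : ⟪x k - x (k+1), y - x (k+1)⟫ =
        (‖x k - x (k+1)‖^2 + ‖y - x (k+1)‖^2 - ‖x k - y‖^2) / 2 := by
      have hdd : (x k - x (k+1)) - (y - x (k+1)) = x k - y := by abel
      have hns := @norm_sub_sq_real H _ _ (x k - x (k+1)) (y - x (k+1))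
      rw [hdd] at hns
      linarith
    have hn1 : ‖x k - x (k+1)‖^2 = ‖x (k+1) - x k‖^2 := by rw [norm_sub_rev]
    have hn2 : ‖y - x (k+1)‖^2 = ‖x (k+1) - y‖^2 := by rw [norm_sub_rev]
    have hFrk1 : Fr (k+1) = (f (x (k+1))).toReal + (g (x (k+1))).toReal := rfl
    -- combine
    rw [hFrk1]
    linarith [h1', h2', h3', hR, hvc', hpar, hn1, hn2]
  -- E k := Fr k - Fs is nonnegative and nonincreasing
  set E : ℕ → ℝ := fun k => Fr k - Fs with hE
  have hEnn : ∀ k, 0 ≤ E k := by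
    intro k
    have := hxs (x k)
    rw [coeF k, coeFs] at this
    have := EReal.coe_le_coe_iff.mp this
    simp only [hE]
    linarith
  have hEmono : ∀ k, E (k+1) ≤ E k := by
    intro k
    have hk := key k (x k) (hfdom k) (hgdom k)
    have hakpos := hpos k
    have h2δ : 0 ≤ 1 - 2*δ := by have := hδ.2; linarith
    have h00 : ‖x k - x k‖ = 0 := by simp
    rw [h00] at hk
    have hFrk : Fr k = (f (x k)).toReal + (g (x k)).toReal := rfl
    simp only [hE]
    nlinarith [sq_nonneg (‖x (k+1) - x k‖), hFrk, hakpos,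
      mul_nonneg h2δ (sq_nonneg (‖x (k+1) - x k‖))]
  -- summability: partial sums bounded
  have hstep : ∀ k, 2 * α * E (k+1) ≤ ‖x k - xs‖^2 - ‖x (k+1) - xs‖^2 := by
    intro k
    have hk := key k xs hfxs hgxs
    have hakpos := hpos k
    have h2δ : 0 ≤ 1 - 2*δ := by have := hδ.2; linarith
    have hEk1 := hEnn (k+1)
    have hk' : 2 * a k * E (k+1) ≤
        ‖x k - xs‖^2 - ‖x (k+1) - xs‖^2 - (1 - 2*δ) * ‖x (k+1) - x k‖^2 := hk
    have hαa : 2 * α * E (k+1) ≤ 2 * a k * E (k+1) := by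
      nlinarith [hak k, hEk1]
    linarith [hαa, hk', mul_nonneg h2δ (sq_nonneg (‖x (k+1) - x k‖))]
  have h2α : (0:ℝ) < 2 * α := by linarith
  have hsum2 : ∀ n, ∑ k ∈ Finset.range n, E (k+1) ≤ (1/(2*α)) * ‖x 0 - xs‖^2 := by
    intro n
    have htel : ∑ k ∈ Finset.range n, (‖x k - xs‖^2 - ‖x (k+1) - xs‖^2)
        = ‖x 0 - xs‖^2 - ‖x n - xs‖^2 :=
      Finset.sum_range_sub' (fun k => ‖x k - xs‖^2) n
    have hle : 2 * α * ∑ k ∈ Finset.range n, E (k+1)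
        ≤ ‖x 0 - xs‖^2 - ‖x n - xs‖^2 := by
      calc 2 * α * ∑ k ∈ Finset.range n, E (k+1)
          = ∑ k ∈ Finset.range n, 2 * α * E (k+1) := Finset.mul_sum _ _ _
        _ ≤ ∑ k ∈ Finset.range n, (‖x k - xs‖^2 - ‖x (k+1) - xs‖^2) :=
            Finset.sum_le_sum (fun k _ => hstep k)
        _ = ‖x 0 - xs‖^2 - ‖x n - xs‖^2 := htel
    have hnn : (0:ℝ) ≤ ‖x n - xs‖^2 := sq_nonneg _
    have hfin : ∑ k ∈ Finset.range n, E (k+1) ≤ ‖x 0 - xs‖^2 / (2*α) := by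
      rw [le_div_iff₀ h2α]
      linarith
    calc ∑ k ∈ Finset.range n, E (k+1) ≤ ‖x 0 - xs‖^2 / (2*α) := hfin
      _ = (1/(2*α)) * ‖x 0 - xs‖^2 := by ring
  have hsumbdd : ∀ n, ∑ i ∈ Finset.range n, E i ≤ E 0 + (1/(2*α)) * ‖x 0 - xs‖^2 := by
    intro n
    cases n with
    | zero =>
      simp only [Finset.range_zero, Finset.sum_empty]
      have h0 := hEnn 0
      have h1 : (0:ℝ) ≤ (1/(2*α)) * ‖x 0 - xs‖^2 := by positivity
      exact add_nonneg h0 h1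
    | succ m =>
      rw [Finset.sum_range_succ']
      linarith [hsum2 m]
  have hTend : Tendsto (fun n : ℕ => (n : ℝ) * E n) atTop (𝓝 0) :=
    nat_mul_tendsto_zero' hEnn hEmono _ hsumbdd
  have hinf : (⨅ y, f y + g y) = ((Fs : ℝ) : EReal) := by
    apply le_antisymm
    · exact coeFs ▸ iInf_le _ xs
    · exact le_iInf fun y => coeFs ▸ hxs y
  have heq : (fun k : ℕ => (k : EReal) * ((f (x k) + g (x k)) - ⨅ y, f y + g y)) =
      fun k : ℕ => ((((k : ℝ) * E k : ℝ)) : EReal) := by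
    funext k
    rw [hinf, coeF k, ← EReal.coe_sub]
    rw [show ((k : ℕ) : EReal) = (((k : ℕ) : ℝ) : EReal) from by exact_mod_cast rfl,
      ← EReal.coe_mul]
  rw [heq]
  have := EReal.tendsto_coe.mpr hTend
  simpa using this
end
end
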